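/- arXiv:2002.10358 — 3 statements merged into one kernel-verified Lean document; each statement's English description precedes it below -/
import Mathlib

section
/- Fix a > 1 and λ = (a−1)/a ∈ (0,1). Let s_i and c_i be sequences of positive reals with |s_i − i^{−a}| < 2e^{−i} and (a−1)^{-1} i^{1−a} − e^{−i} < c_i < (a−1)^{-1}(i−1)^{1−a} + e^{−i} for all i ≥ 1, and set g_i = i·s_i + c_i. Then limsup_{i→∞} g_i / s_i^λ is a finite positive real number (indeed lim g_i/s_i^λ = a/(a−1)). -/
/-!
Normalise: `tᵢ = sᵢ iᵃ → 1` and `uᵢ = cᵢ i^(a-1) → (a-1)⁻¹`, in both cases because `e^(-i)` beats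
every power of `i` (for `cᵢ` the two bounds squeeze `uᵢ` since `(1 - 1/i)^(1-a) → 1`). As
`λ = 1 - 1/a`, one has exactly `gᵢ / sᵢ^λ = tᵢ^(1/a) + uᵢ tᵢ^(-λ)`, which tends to
`1 + (a-1)⁻¹ = a/(a-1)`.
-/

open Filter Topology Real

theorem tendsto_natCast_rpow_mul_exp_neg (b : ℝ) :
    Tendsto (fun i : ℕ => (i : ℝ) ^ b * exp (-(i : ℝ))) atTop (𝓝 0) := by
  simpa [Function.comp_def] using
    (tendsto_rpow_mul_exp_neg_mul_atTop_nhds_zero b 1 one_pos).comp tendsto_natCast_atTop_atTop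

theorem tendsto_mul_natCast_rpow_of_abs_sub_le {a C : ℝ} {s : ℕ → ℝ}
    (hs : ∀ᶠ i : ℕ in atTop, |s i - (i : ℝ) ^ (-a)| ≤ C * exp (-(i : ℝ))) :
    Tendsto (fun i : ℕ => s i * (i : ℝ) ^ a) atTop (𝓝 1) := by
  have hbound : ∀ᶠ i : ℕ in atTop,
      ‖s i * (i : ℝ) ^ a - 1‖ ≤ C * ((i : ℝ) ^ a * exp (-(i : ℝ))) := by
    filter_upwards [hs, eventually_ge_atTop 1] with i hsi hi
    have hn : (0 : ℝ) < i := by exact_mod_cast hi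
    have hcancel : s i * (i : ℝ) ^ a - 1 = (s i - (i : ℝ) ^ (-a)) * (i : ℝ) ^ a := by
      rw [sub_mul, ← rpow_add hn, neg_add_cancel, rpow_zero]
    rw [hcancel, Real.norm_eq_abs, abs_mul, abs_of_nonneg (rpow_nonneg hn.le a)]
    calc |s i - (i : ℝ) ^ (-a)| * (i : ℝ) ^ a ≤ C * exp (-(i : ℝ)) * (i : ℝ) ^ a :=
          mul_le_mul_of_nonneg_right hsi (rpow_nonneg hn.le a)
      _ = C * ((i : ℝ) ^ a * exp (-(i : ℝ))) := by ring
  have hzero : Tendsto (fun i : ℕ => s i * (i : ℝ) ^ a - 1) atTop (𝓝 0) :=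
    squeeze_zero_norm' hbound (by simpa using (tendsto_natCast_rpow_mul_exp_neg a).const_mul C)
  simpa using hzero.add_const 1

theorem tendsto_mul_natCast_rpow_sub_one_of_bounds {a K : ℝ} {c : ℕ → ℝ}
    (hc : ∀ᶠ i : ℕ in atTop,
      K * (i : ℝ) ^ (1 - a) - exp (-(i : ℝ)) ≤ c i ∧
      c i ≤ K * ((i : ℝ) - 1) ^ (1 - a) + exp (-(i : ℝ))) :
    Tendsto (fun i : ℕ => c i * (i : ℝ) ^ (a - 1)) atTop (𝓝 K) := by
  have hexp : Tendsto (fun i : ℕ => exp (-(i : ℝ)) * (i : ℝ) ^ (a - 1)) atTop (𝓝 0) := by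
    simpa [mul_comm] using tendsto_natCast_rpow_mul_exp_neg (a - 1)
  have hlower : Tendsto (fun i : ℕ => K - exp (-(i : ℝ)) * (i : ℝ) ^ (a - 1)) atTop (𝓝 K) := by
    simpa using hexp.const_sub K
  have hupper : Tendsto (fun i : ℕ =>
      K * (1 - (i : ℝ)⁻¹) ^ (1 - a) + exp (-(i : ℝ)) * (i : ℝ) ^ (a - 1)) atTop (𝓝 K) := by
    have hone : Tendsto (fun i : ℕ => 1 - (i : ℝ)⁻¹) atTop (𝓝 1) := by
      simpa using tendsto_inv_atTop_nhds_zero_nat.const_sub (1 : ℝ)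
    simpa using ((hone.rpow_const (Or.inl one_ne_zero) (p := 1 - a)).const_mul K).add hexp
  refine tendsto_of_tendsto_of_tendsto_of_le_of_le' hlower hupper ?_ ?_
  · filter_upwards [hc, eventually_ge_atTop 1] with i hci hi
    have hn : (0 : ℝ) < i := by exact_mod_cast hi
    calc K - exp (-(i : ℝ)) * (i : ℝ) ^ (a - 1)
        = (K * (i : ℝ) ^ (1 - a) - exp (-(i : ℝ))) * (i : ℝ) ^ (a - 1) := by
          rw [sub_mul, mul_assoc, ← rpow_add hn, sub_add_sub_cancel', sub_self, rpow_zero,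
            mul_one]
      _ ≤ c i * (i : ℝ) ^ (a - 1) := mul_le_mul_of_nonneg_right hci.1 (rpow_nonneg hn.le _)
  · filter_upwards [hc, eventually_ge_atTop 2] with i hci hi
    have hn2 : (2 : ℝ) ≤ i := by exact_mod_cast hi
    have hn : (0 : ℝ) < i := by linarith
    have hshift : ((i : ℝ) - 1) ^ (1 - a) * (i : ℝ) ^ (a - 1) = (1 - (i : ℝ)⁻¹) ^ (1 - a) := by
      have hsub : 1 - (i : ℝ)⁻¹ = ((i : ℝ) - 1) / i := by field_simp
      rw [hsub, div_rpow (by linarith) hn.le, div_eq_mul_inv, ← rpow_neg hn.le, neg_sub]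
    calc c i * (i : ℝ) ^ (a - 1)
        ≤ (K * ((i : ℝ) - 1) ^ (1 - a) + exp (-(i : ℝ))) * (i : ℝ) ^ (a - 1) :=
          mul_le_mul_of_nonneg_right hci.2 (rpow_nonneg hn.le _)
      _ = K * (1 - (i : ℝ)⁻¹) ^ (1 - a) + exp (-(i : ℝ)) * (i : ℝ) ^ (a - 1) := by
          rw [add_mul, mul_assoc, hshift]

theorem mul_add_div_rpow_eq {a n x : ℝ} (ha : a ≠ 0) (hn : 0 < n) (hx : 0 < x) (c : ℝ) :
    (n * x + c) / x ^ ((a - 1) / a) =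
      (x * n ^ a) ^ a⁻¹ + c * n ^ (a - 1) * (x * n ^ a) ^ (-((a - 1) / a)) := by
  rw [mul_rpow hx.le (rpow_nonneg hn.le a), mul_rpow hx.le (rpow_nonneg hn.le a),
    ← rpow_mul hn.le, ← rpow_mul hn.le, mul_inv_cancel₀ ha, rpow_one, rpow_neg hx.le]
  have hexp : a * -((a - 1) / a) = 1 - a := by field_simp; ring
  rw [hexp]
  have hx_pow : x ^ ((a - 1) / a) * x ^ a⁻¹ = x := by
    have hsum : (a - 1) / a + a⁻¹ = 1 := by field_simp; ring
    rw [← rpow_add hx, hsum, rpow_one]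
  have hn_pow : n ^ (a - 1) * n ^ (1 - a) = 1 := by
    rw [← rpow_add hn, sub_add_sub_cancel', sub_self, rpow_zero]
  have hpos : x ^ ((a - 1) / a) ≠ 0 := (rpow_pos_of_pos hx _).ne'
  rw [div_eq_iff hpos]
  linear_combination (-n) * hx_pow - c * ((x ^ ((a - 1) / a))⁻¹ * x ^ ((a - 1) / a)) * hn_pow -
    c * inv_mul_cancel₀ hpos

theorem stmt_8_general (a : ℝ) (ha : 1 < a) (s c : ℕ → ℝ)
    (hs : ∀ i : ℕ, 1 ≤ i → |s i - (i : ℝ) ^ (-a)| < 2 * Real.exp (-(i : ℝ)))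
    (hc : ∀ i : ℕ, 1 ≤ i →
      (a - 1)⁻¹ * (i : ℝ) ^ (1 - a) - Real.exp (-(i : ℝ)) < c i ∧
      c i < (a - 1)⁻¹ * ((i : ℝ) - 1) ^ (1 - a) + Real.exp (-(i : ℝ))) :
    Tendsto (fun i : ℕ => ((i : ℝ) * s i + c i) / s i ^ ((a - 1) / a)) atTop
      (nhds (a / (a - 1))) := by
  have ht : Tendsto (fun i : ℕ => s i * (i : ℝ) ^ a) atTop (𝓝 1) :=
    tendsto_mul_natCast_rpow_of_abs_sub_le <|
      (eventually_ge_atTop 1).mono fun i hi => (hs i hi).le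
  have hu : Tendsto (fun i : ℕ => c i * (i : ℝ) ^ (a - 1)) atTop (𝓝 (a - 1)⁻¹) :=
    tendsto_mul_natCast_rpow_sub_one_of_bounds <|
      (eventually_ge_atTop 1).mono fun i hi => ⟨(hc i hi).1.le, (hc i hi).2.le⟩
  have hlim : Tendsto (fun i : ℕ => (s i * (i : ℝ) ^ a) ^ a⁻¹ +
      c i * (i : ℝ) ^ (a - 1) * (s i * (i : ℝ) ^ a) ^ (-((a - 1) / a))) atTop
      (𝓝 (a / (a - 1))) := by
    convert (ht.rpow_const (Or.inl one_ne_zero)).add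
      (hu.mul (ht.rpow_const (Or.inl one_ne_zero))) using 2
    have : a - 1 ≠ 0 := by linarith
    rw [one_rpow, one_rpow, mul_one]
    field_simp
    ring
  have hspos : ∀ᶠ i : ℕ in atTop, 0 < s i := by
    filter_upwards [ht.eventually (lt_mem_nhds one_pos), eventually_ge_atTop 1] with i hti hi
    exact (mul_pos_iff_of_pos_right (rpow_pos_of_pos (by exact_mod_cast hi) a)).1 hti
  refine hlim.congr' ?_
  filter_upwards [hspos, eventually_ge_atTop 1] with i hsi hi
  exact (mul_add_div_rpow_eq (by linarith) (by exact_mod_cast hi) hsi (c i)).symm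

/-- With `λ = (a-1)/a`, `s i ≈ i^{-a}` and `c i ≈ (a-1)⁻¹ i^{1-a}`, the ratio
`(i·s i + c i)/(s i)^λ` converges to the finite positive number `a/(a-1)`. -/
theorem stmt_8 (a : ℝ) (ha : 1 < a) (s c : ℕ → ℝ)
    (hspos : ∀ i, 0 < s i) (hcpos : ∀ i, 0 < c i)
    (hs : ∀ i : ℕ, 1 ≤ i → |s i - (i : ℝ) ^ (-a)| < 2 * Real.exp (-(i : ℝ)))
    (hc : ∀ i : ℕ, 1 ≤ i →
      (a - 1)⁻¹ * (i : ℝ) ^ (1 - a) - Real.exp (-(i : ℝ)) < c i ∧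
      c i < (a - 1)⁻¹ * ((i : ℝ) - 1) ^ (1 - a) + Real.exp (-(i : ℝ))) :
    Tendsto (fun i : ℕ => ((i : ℝ) * s i + c i) / s i ^ ((a - 1) / a)) atTop
      (nhds (a / (a - 1))) :=
  stmt_8_general a ha s c hs hc
end

section
/- Fix a > 1, λ = (a−1)/a, and μ with λ < μ ≤ 1. With s_i and g_i as above (|s_i − i^{−a}| < 2e^{−i}, g_i = i·s_i + c_i with (a−1)^{-1} i^{1−a} − e^{−i} < c_i), one has limsup_{i→∞} g_i / s_{i}^μ = ∞. -/
open Filter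

/-- With `λ = (a-1)/a < μ ≤ 1`, `s i ≈ i^{-a}` and `c i ≳ (a-1)⁻¹ i^{1-a}`, one has
`limsup_i (i·s i + c i)/(s i)^μ = ∞`. -/
theorem stmt_9 (a : ℝ) (ha : 1 < a) (m : ℝ) (hlm : (a - 1) / a < m) (hm : m ≤ 1)
    (s c : ℕ → ℝ) (hspos : ∀ i, 0 < s i)
    (hs : ∀ i : ℕ, 1 ≤ i → |s i - (i : ℝ) ^ (-a)| < 2 * Real.exp (-(i : ℝ)))
    (hc : ∀ i : ℕ, 1 ≤ i →
      (a - 1)⁻¹ * (i : ℝ) ^ (1 - a) - Real.exp (-(i : ℝ)) < c i) :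
    Filter.limsup
      (fun i : ℕ => ((((i : ℝ) * s i + c i) / s i ^ m : ℝ) : EReal)) atTop = ⊤ := by
  have ha0 : (0:ℝ) < a := by linarith
  have hm0 : (0:ℝ) < m := lt_trans (div_pos (by linarith) ha0) hlm
  set b : ℝ := a * m - (a - 1) with hbdef
  have hb : 0 < b := by
    have h := (div_lt_iff₀ ha0).mp hlm
    have : a - 1 < m * a := h
    simp only [hbdef]; nlinarith
  -- eventual smallness of x^a * exp(-x)
  have hexp : ∀ᶠ x : ℝ in atTop, x ^ a * Real.exp (-x) ≤ 1/12 := by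
    have h := tendsto_rpow_mul_exp_neg_mul_atTop_nhds_zero a 1 one_pos
    have h' : Tendsto (fun x : ℝ => x ^ a * Real.exp (-x)) atTop (nhds 0) := by
      refine h.congr fun x => by rw [neg_mul, one_mul]
    exact h'.eventually_le_const (by norm_num)
  have hexpN : ∀ᶠ i : ℕ in atTop, (i:ℝ) ^ a * Real.exp (-(i:ℝ)) ≤ 1/12 :=
    tendsto_natCast_atTop_atTop.eventually hexp
  set C : ℝ := (4 * 2 ^ m)⁻¹ with hCdef
  have hC : 0 < C := by
    have : (0:ℝ) < 2 ^ m := Real.rpow_pos_of_pos (by norm_num) m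
    positivity
  -- the lower bound
  have key : ∀ᶠ i : ℕ in atTop,
      C * (i:ℝ) ^ b ≤ ((i:ℝ) * s i + c i) / s i ^ m := by
    filter_upwards [hexpN, eventually_ge_atTop 1] with i he hi1
    have hi : (1:ℝ) ≤ (i:ℝ) := by exact_mod_cast hi1
    have hip : (0:ℝ) < (i:ℝ) := by linarith
    have hia : (0:ℝ) < (i:ℝ) ^ a := Real.rpow_pos_of_pos hip a
    have hina : (0:ℝ) < (i:ℝ) ^ (-a) := Real.rpow_pos_of_pos hip (-a)
    have hexp_le : Real.exp (-(i:ℝ)) ≤ (1/12) * (i:ℝ) ^ (-a) := by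
      have heq : Real.exp (-(i:ℝ)) = ((i:ℝ)^a * Real.exp (-(i:ℝ))) * ((i:ℝ)^a)⁻¹ := by
        field_simp
      rw [Real.rpow_neg hip.le, heq]
      exact mul_le_mul_of_nonneg_right he (by positivity)
    have hsabs := abs_lt.mp (hs i hi1)
    have hslow : (1/2 : ℝ) * (i:ℝ) ^ (-a) ≤ s i := by nlinarith [hsabs.1, hexp_le]
    have hshigh : s i ≤ 2 * (i:ℝ) ^ (-a) := by nlinarith [hsabs.2, hexp_le]
    -- numerator lower bound
    have hione : (i:ℝ) * (i:ℝ) ^ (-a) = (i:ℝ) ^ (1 - a) := by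
      rw [show (1:ℝ) - a = 1 + (-a) by ring, Real.rpow_add hip, Real.rpow_one]
    have hi1a : (0:ℝ) < (i:ℝ) ^ (1 - a) := Real.rpow_pos_of_pos hip _
    have hle : (i:ℝ) ^ (-a) ≤ (i:ℝ) ^ (1 - a) :=
      Real.rpow_le_rpow_of_exponent_le hi (by linarith)
    have hclow : -((1/12 : ℝ) * (i:ℝ) ^ (1 - a)) ≤ c i := by
      have h1 := hc i hi1
      have h2 : (0:ℝ) ≤ (a - 1)⁻¹ * (i:ℝ) ^ (1 - a) := mul_nonneg (inv_nonneg.mpr (by linarith)) hi1a.le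
      nlinarith [hexp_le, hle]
    have hnum : (1/4 : ℝ) * (i:ℝ) ^ (1 - a) ≤ (i:ℝ) * s i + c i := by
      have : (1/2 : ℝ) * (i:ℝ) ^ (1 - a) ≤ (i:ℝ) * s i := by
        calc (1/2 : ℝ) * (i:ℝ) ^ (1 - a) = (i:ℝ) * ((1/2) * (i:ℝ)^(-a)) := by
              rw [← hione]; ring
          _ ≤ (i:ℝ) * s i := by
              apply mul_le_mul_of_nonneg_left hslow hip.le
      nlinarith
    -- denominator upper bound
    have hden : s i ^ m ≤ 2 ^ m * (i:ℝ) ^ (-(a * m)) := by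
      calc s i ^ m ≤ (2 * (i:ℝ) ^ (-a)) ^ m :=
            Real.rpow_le_rpow (hspos i).le hshigh hm0.le
        _ = 2 ^ m * ((i:ℝ) ^ (-a)) ^ m := Real.mul_rpow (by norm_num) hina.le
        _ = 2 ^ m * (i:ℝ) ^ (-(a * m)) := by
            rw [← Real.rpow_mul hip.le, neg_mul]
    have hdpos : (0:ℝ) < s i ^ m := Real.rpow_pos_of_pos (hspos i) m
    have h2m : (0:ℝ) < 2 ^ m * (i:ℝ) ^ (-(a * m)) := by
      have : (0:ℝ) < (2:ℝ) ^ m := Real.rpow_pos_of_pos (by norm_num) m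
      have : (0:ℝ) < (i:ℝ) ^ (-(a * m)) := Real.rpow_pos_of_pos hip _
      positivity
    have hdiv : ((1/4 : ℝ) * (i:ℝ) ^ (1 - a)) / (2 ^ m * (i:ℝ) ^ (-(a * m)))
        ≤ ((i:ℝ) * s i + c i) / s i ^ m :=
      div_le_div₀ (le_trans (by positivity) hnum) hnum hdpos hden
    refine le_trans (le_of_eq ?_) hdiv
    have hsplit : (i:ℝ) ^ (1 - a) = (i:ℝ) ^ b * (i:ℝ) ^ (-(a * m)) := by
      rw [← Real.rpow_add hip]; congr 1; simp only [hbdef]; ring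
    have h2mne : ((2:ℝ) ^ m) ≠ 0 := (Real.rpow_pos_of_pos (by norm_num) m).ne'
    have hiamne : ((i:ℝ) ^ (-(a * m))) ≠ 0 := (Real.rpow_pos_of_pos hip _).ne'
    rw [hsplit, hCdef]
    field_simp
  -- conclude
  have htop : Tendsto (fun i : ℕ => ((((i : ℝ) * s i + c i) / s i ^ m : ℝ) : EReal))
      atTop (nhds ⊤) := by
    rw [EReal.tendsto_nhds_top_iff_real]
    intro x
    have hT : Tendsto (fun i : ℕ => C * (i:ℝ) ^ b) atTop atTop := by
      exact (tendsto_rpow_atTop hb).comp tendsto_natCast_atTop_atTop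
        |>.const_mul_atTop hC
    filter_upwards [key, hT.eventually_gt_atTop x] with i h1 h2
    exact_mod_cast lt_of_lt_of_le h2 h1
  exact htop.limsup_eq
end

section
/- Let F : [0,∞) → ℝ ∪ {∞} be convex, decreasing, piecewise linear with infinitely many nodes n_1 < n_2 < ⋯ (n_i → ∞) and slopes −s_i on (n_i, n_{i+1}) with s_i ↓ 0 and lim s_i n_{i+1} = 0. Then the Legendre transform L(F)(t) = inf_x (F(x)+tx) satisfies: L(F) is affine with slope n_{i+1} on (s_{i+1}, s_i), affine with slope n_1 on (s_1, ∞), and L(F)(0⁺) = inf_x F(x). -/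
/-!
On the segment `[n j, n (j+1)]` the function `x ↦ F x + t x` is affine, so its infimum over
`x ≥ 0` is the least of the node values `Fn j + t · n j`. Consecutive node values differ by
`(t - s j)(n (j+1) - n j)`, so for `s k ≤ t ≤ s (k-1)` they decrease up to `k` and increase
after it: the transform equals `Fn k + t · n k` there, an affine function of slope `n k`.
The limit at `0⁺` holds for any `F`: `F x + t x` decreases to `F x` as `t ↓ 0`.
-/

open Filter Set Topology

noncomputable def legendreTransform (F : ℝ → EReal) (t : ℝ) : EReal :=
  ⨅ x : Ici (0 : ℝ), (F x.1 + ((t * x.1 : ℝ) : EReal))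

theorem iInf_le_legendreTransform (F : ℝ → EReal) {t : ℝ} (ht : 0 ≤ t) :
    ⨅ x : Ici (0 : ℝ), F x.1 ≤ legendreTransform F t :=
  le_iInf fun x => (iInf_le _ x).trans <|
    le_add_of_nonneg_right (EReal.coe_nonneg.2 (mul_nonneg ht x.2))

theorem tendsto_legendreTransform_nhdsGT_zero (F : ℝ → EReal) :
    Tendsto (legendreTransform F) (𝓝[>] 0) (𝓝 (⨅ x : Ici (0 : ℝ), F x.1)) := by
  refine tendsto_order.2 ⟨fun b hb => ?_, fun b hb => ?_⟩
  · filter_upwards [self_mem_nhdsWithin] with t ht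
    exact hb.trans_le (iInf_le_legendreTransform F (le_of_lt ht))
  · obtain ⟨x, hx⟩ := iInf_lt_iff.1 hb
    have hlin : Tendsto (fun t : ℝ => t * x.1) (𝓝[>] 0) (𝓝 0) :=
      ((continuous_mul_const x.1).tendsto' 0 0 (zero_mul _)).mono_left nhdsWithin_le_nhds
    have hshift := (EReal.continuousAt_add (p := (F x.1, ((0 : ℝ) : EReal)))
      (Or.inr (EReal.coe_ne_bot 0)) (Or.inr (EReal.coe_ne_top 0))).tendsto.comp
      (tendsto_const_nhds.prodMk_nhds (EReal.tendsto_coe.2 hlin))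
    rw [EReal.coe_zero, add_zero] at hshift
    filter_upwards [hshift.eventually (gt_mem_nhds hx)] with t ht
    exact (iInf_le _ x).trans_lt ht

theorem exists_le_le_succ_of_tendsto_atTop {n : ℕ → ℝ} (hntop : Tendsto n atTop atTop) {x : ℝ}
    (hx : n 0 ≤ x) : ∃ j, n j ≤ x ∧ x ≤ n (j + 1) := by
  by_contra! h
  have hle : ∀ j, n j ≤ x := fun j => Nat.rec hx (fun j ih => (h j ih).le) j
  obtain ⟨j, hj⟩ := (hntop.eventually_gt_atTop x).exists
  exact (hle j).not_gt hj

section PiecewiseLinear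

variable {n s Fn : ℕ → ℝ} {F : ℝ → EReal}

theorem legendreTransform_eq_iInf_nodes (hn0 : 0 ≤ n 0) (hnmono : Monotone n)
    (hntop : Tendsto n atTop atTop)
    (hFnrec : ∀ i, Fn (i + 1) = Fn i - s i * (n (i + 1) - n i))
    (hFtop : ∀ x : ℝ, x < n 0 → F x = ⊤)
    (hFseg : ∀ i, ∀ x : ℝ, n i ≤ x → x ≤ n (i + 1) →
      F x = ((Fn i - s i * (x - n i) : ℝ) : EReal)) (t : ℝ) :
    legendreTransform F t = ⨅ j, ((Fn j + t * n j : ℝ) : EReal) := by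
  refine le_antisymm (le_iInf fun j => ?_) (le_iInf fun x => ?_)
  · have hnode : F (n j) = Fn j := by simpa using hFseg j (n j) le_rfl (hnmono j.le_succ)
    calc legendreTransform F t ≤ F (n j) + ((t * n j : ℝ) : EReal) :=
          iInf_le (fun x : Ici (0 : ℝ) => F x.1 + ((t * x.1 : ℝ) : EReal))
            ⟨n j, hn0.trans (hnmono j.zero_le)⟩
      _ = ((Fn j + t * n j : ℝ) : EReal) := by rw [hnode, EReal.coe_add]
  rcases lt_or_ge x.1 (n 0) with hlt | hge
  · rw [hFtop x.1 hlt, EReal.top_add_coe]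
    exact le_top
  obtain ⟨j, hj, hj'⟩ := exists_le_le_succ_of_tendsto_atTop hntop hge
  rw [hFseg j x.1 hj hj', ← EReal.coe_add]
  -- the affine function `x ↦ F x + t x` on `[n j, n (j+1)]` has slope `t - s j`
  rcases le_total (s j) t with hst | hts
  · refine (iInf_le _ j).trans (EReal.coe_le_coe_iff.2 ?_)
    nlinarith
  · refine (iInf_le _ (j + 1)).trans (EReal.coe_le_coe_iff.2 ?_)
    rw [hFnrec j]
    nlinarith

theorem node_value_le_of_slopes (hnmono : Monotone n)
    (hFnrec : ∀ i, Fn (i + 1) = Fn i - s i * (n (i + 1) - n i)) {t : ℝ} {k : ℕ}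
    (hup : ∀ j, k ≤ j → s j ≤ t) (hdown : ∀ j, j < k → t ≤ s j) (j : ℕ) :
    Fn k + t * n k ≤ Fn j + t * n j := by
  set h : ℕ → ℝ := fun j => Fn j + t * n j
  have hstep : ∀ j, h (j + 1) = h j + (t - s j) * (n (j + 1) - n j) := fun j => by
    simp only [h, hFnrec j]; ring
  have hgap : ∀ j, 0 ≤ n (j + 1) - n j := fun j => sub_nonneg.2 (hnmono j.le_succ)
  rcases le_total k j with hkj | hjk
  · refine monotoneOn_of_le_add_one (f := h) ordConnected_Ici (fun m _ hm _ => ?_) self_mem_Ici hkj hkj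
    rw [hstep]
    exact le_add_of_nonneg_right (mul_nonneg (sub_nonneg.2 (hup m hm)) (hgap m))
  · refine antitoneOn_of_add_one_le (f := h) ordConnected_Iic (fun m _ _ hm => ?_) hjk self_mem_Iic hjk
    rw [hstep]
    exact add_le_of_nonpos_right
      (mul_nonpos_of_nonpos_of_nonneg (sub_nonpos.2 (hdown m hm)) (hgap m))

theorem legendreTransform_eq_of_slopes (hn0 : 0 ≤ n 0) (hnmono : Monotone n)
    (hntop : Tendsto n atTop atTop)
    (hFnrec : ∀ i, Fn (i + 1) = Fn i - s i * (n (i + 1) - n i))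
    (hFtop : ∀ x : ℝ, x < n 0 → F x = ⊤)
    (hFseg : ∀ i, ∀ x : ℝ, n i ≤ x → x ≤ n (i + 1) →
      F x = ((Fn i - s i * (x - n i) : ℝ) : EReal)) (t : ℝ) (k : ℕ)
    (hup : ∀ j, k ≤ j → s j ≤ t) (hdown : ∀ j, j < k → t ≤ s j) :
    legendreTransform F t = ((n k * t + Fn k : ℝ) : EReal) := by
  rw [legendreTransform_eq_iInf_nodes hn0 hnmono hntop hFnrec hFtop hFseg]
  refine le_antisymm (iInf_le_of_le k (by rw [add_comm, mul_comm])) (le_iInf fun j => ?_)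
  rw [EReal.coe_le_coe_iff, add_comm, mul_comm]
  exact node_value_le_of_slopes hnmono hFnrec hup hdown j

end PiecewiseLinear

theorem stmt_19_general (n s : ℕ → ℝ) (F : ℝ → EReal) (Fn : ℕ → ℝ)
    (hn0 : 0 ≤ n 0) (hnmono : StrictMono n) (hntop : Tendsto n atTop atTop)
    (hsanti : StrictAnti s)
    (hFnrec : ∀ i, Fn (i + 1) = Fn i - s i * (n (i + 1) - n i))
    (hFtop : ∀ x : ℝ, x < n 0 → F x = ⊤)
    (hFseg : ∀ i, ∀ x : ℝ, n i ≤ x → x ≤ n (i + 1) →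
      F x = ((Fn i - s i * (x - n i) : ℝ) : EReal)) :
    (∀ i : ℕ, ∃ b : ℝ, ∀ t ∈ Set.Ioo (s (i + 1)) (s i),
      (⨅ x : Set.Ici (0:ℝ), (F x.1 + ((t * x.1 : ℝ) : EReal))) =
        ((n (i + 1) * t + b : ℝ) : EReal)) ∧
    (∃ b : ℝ, ∀ t : ℝ, s 0 < t →
      (⨅ x : Set.Ici (0:ℝ), (F x.1 + ((t * x.1 : ℝ) : EReal))) =
        ((n 0 * t + b : ℝ) : EReal)) ∧
    Tendsto (fun t : ℝ => ⨅ x : Set.Ici (0:ℝ), (F x.1 + ((t * x.1 : ℝ) : EReal)))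
      (nhdsWithin 0 (Set.Ioi 0)) (nhds (⨅ x : Set.Ici (0:ℝ), F x.1)) := by
  have hL := legendreTransform_eq_of_slopes hn0 hnmono.monotone hntop hFnrec hFtop hFseg
  refine ⟨fun i => ⟨Fn (i + 1), fun t ht => hL t (i + 1) ?_ ?_⟩, ⟨Fn 0, fun t ht => hL t 0 ?_ ?_⟩,
    tendsto_legendreTransform_nhdsGT_zero F⟩
  · exact fun j hj => (hsanti.antitone hj).trans ht.1.le
  · exact fun j hj => ht.2.le.trans (hsanti.antitone (Nat.lt_succ_iff.1 hj))
  · exact fun j _ => (hsanti.antitone j.zero_le).trans ht.le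
  · exact fun j hj => absurd hj j.not_lt_zero

/-- Proposition 2 (Fargues–Fontaine): for a convex decreasing piecewise linear `F` with
nodes `n i` (indexed from 0, so `n 0` is the paper's `n₁`), slopes `-s i` on
`[n i, n (i+1)]`, `s i ↓ 0` and `s i · n (i+1) → 0`, the Legendre transform
`L(F)(t) = inf_{x ≥ 0} (F x + t x)` is affine with slope `n (i+1)` on `(s (i+1), s i)`,
affine with slope `n 0` on `(s 0, ∞)`, and tends to `inf F` as `t → 0⁺`. -/
theorem stmt_19 (n s : ℕ → ℝ) (c : ℝ) (F : ℝ → EReal) (Fn : ℕ → ℝ)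
    (hn0 : 0 ≤ n 0) (hnmono : StrictMono n) (hntop : Tendsto n atTop atTop)
    (hspos : ∀ i, 0 < s i) (hsanti : StrictAnti s)
    (hs0 : Tendsto s atTop (nhds 0))
    (hlim : Tendsto (fun i => s i * n (i + 1)) atTop (nhds 0))
    (hFn0 : Fn 0 = c)
    (hFnrec : ∀ i, Fn (i + 1) = Fn i - s i * (n (i + 1) - n i))
    (hFtop : ∀ x : ℝ, x < n 0 → F x = ⊤)
    (hFseg : ∀ i, ∀ x : ℝ, n i ≤ x → x ≤ n (i + 1) →
      F x = ((Fn i - s i * (x - n i) : ℝ) : EReal)) :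
    (∀ i : ℕ, ∃ b : ℝ, ∀ t ∈ Set.Ioo (s (i + 1)) (s i),
      (⨅ x : Set.Ici (0:ℝ), (F x.1 + ((t * x.1 : ℝ) : EReal))) =
        ((n (i + 1) * t + b : ℝ) : EReal)) ∧
    (∃ b : ℝ, ∀ t : ℝ, s 0 < t →
      (⨅ x : Set.Ici (0:ℝ), (F x.1 + ((t * x.1 : ℝ) : EReal))) =
        ((n 0 * t + b : ℝ) : EReal)) ∧
    Tendsto (fun t : ℝ => ⨅ x : Set.Ici (0:ℝ), (F x.1 + ((t * x.1 : ℝ) : EReal)))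
      (nhdsWithin 0 (Set.Ioi 0)) (nhds (⨅ x : Set.Ici (0:ℝ), F x.1)) :=
  stmt_19_general n s F Fn hn0 hnmono hntop hsanti hFnrec hFtop hFseg
end
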